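/- arXiv:2209.01143 — 3 statements merged into one kernel-verified Lean document; each statement's English description precedes it below -/
import Mathlib

section
/- Let E be a real inner product space, let r_t : E → ℝ (for integers t, with r_s ≡ 0 for s ≤ 0) be differentiable functions, and let w ≥ 1, T ≥ 1 be integers and δ ≥ 0. Define u_{w,t}(θ) = (1/w) · Σ_{i=0}^{w-1} r_{t-i}(θ). Suppose θ_1, …, θ_T ∈ E satisfy the Batch-Update termination condition ‖∇u_{w,t-1}(θ_t)‖ ≤ δ for every t ∈ {1,…,T}, and suppose V_1,…,V_T ≥ 0 satisfy ‖∇r_t(θ) − ∇r_{t−w}(θ)‖² ≤ V_t for all θ ∈ E and t ∈ {1,…,T}. Then the average w-local regret satisfies (1/T) · Σ_{t=1}^T ‖∇u_{w,t}(θ_t)‖² ≤ 2δ² + (2/w²) · (1/T) · Σ_{t=1}^T V_t. -/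
/-! Consecutive smoothed losses differ by a telescoping sum,
`∇u_{w,t} - ∇u_{w,t-1} = (∇r_t - ∇r_{t-w}) / w`. Hence, at `θ_t`,
`‖∇u_{w,t}‖² ≤ 2‖∇u_{w,t-1}‖² + (2/w²)‖∇r_t - ∇r_{t-w}‖² ≤ 2δ² + (2/w²) V_t`,
and averaging over `t` gives the bound. -/

open Finset

noncomputable def smoothedLoss {E : Type*} (r : ℤ → E → ℝ) (w : ℕ) (t : ℤ) (θ : E) : ℝ :=
  (1 / (w : ℝ)) * ∑ i ∈ range w, r (t - i) θ

lemma Finset.sum_range_sub_sum_range_pred {M : Type*} [AddCommGroup M] (g : ℤ → M) (t : ℤ)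
    (w : ℕ) :
    ∑ i ∈ range w, g (t - i) - ∑ i ∈ range w, g (t - 1 - i) = g t - g (t - w) := by
  have hshift : ∀ i : ℕ, t - 1 - i = t - ((i + 1 : ℕ) : ℤ) := fun i => by push_cast; ring
  simp only [hshift, ← sum_sub_distrib, sum_range_sub' (fun i : ℕ => g (t - i))]
  simp

lemma norm_sq_le_two_mul_sq_add_two_mul_norm_sub_sq {F : Type*} [SeminormedAddCommGroup F]
    (a b : F) : ‖a‖ ^ 2 ≤ 2 * ‖b‖ ^ 2 + 2 * ‖a - b‖ ^ 2 := by
  nlinarith [norm_le_norm_add_norm_sub' a b, add_sq_le (a := ‖b‖) (b := ‖a - b‖), norm_nonneg a]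

section Gradient

variable {E : Type*} [NormedAddCommGroup E] [InnerProductSpace ℝ E] [CompleteSpace E]

lemma gradient_const_mul_sum {ι : Type*} {f : ι → E → ℝ} {s : Finset ι} {x : E}
    (hf : ∀ i ∈ s, DifferentiableAt ℝ (f i) x) (c : ℝ) :
    gradient (fun y => c * ∑ i ∈ s, f i y) x = c • ∑ i ∈ s, gradient (f i) x := by
  simp only [gradient, fderiv_const_mul (DifferentiableAt.fun_sum hf), fderiv_fun_sum hf,
    map_smul, map_sum]

variable {r : ℤ → E → ℝ} (hr : ∀ t, Differentiable ℝ (r t)) (w : ℕ) (t : ℤ) (x : E)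
include hr

lemma gradient_smoothedLoss :
    gradient (smoothedLoss r w t) x = (1 / (w : ℝ)) • ∑ i ∈ range w, gradient (r (t - i)) x :=
  gradient_const_mul_sum (fun _ _ => (hr _).differentiableAt) _

lemma gradient_smoothedLoss_sub_pred :
    gradient (smoothedLoss r w t) x - gradient (smoothedLoss r w (t - 1)) x
      = (1 / (w : ℝ)) • (gradient (r t) x - gradient (r (t - w)) x) := by
  rw [gradient_smoothedLoss hr, gradient_smoothedLoss hr, ← smul_sub,
    sum_range_sub_sum_range_pred (fun s => gradient (r s) x)]

lemma norm_gradient_smoothedLoss_sq_le :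
    ‖gradient (smoothedLoss r w t) x‖ ^ 2
      ≤ 2 * ‖gradient (smoothedLoss r w (t - 1)) x‖ ^ 2
        + 2 / (w : ℝ) ^ 2 * ‖gradient (r t) x - gradient (r (t - w)) x‖ ^ 2 := by
  have hdiff := norm_sq_le_two_mul_sq_add_two_mul_norm_sub_sq
    (gradient (smoothedLoss r w t) x) (gradient (smoothedLoss r w (t - 1)) x)
  rw [gradient_smoothedLoss_sub_pred hr, norm_smul, mul_pow, Real.norm_eq_abs, sq_abs] at hdiff
  convert hdiff using 2
  ring

end Gradient

lemma average_le_add_average {ι : Type*} {s : Finset ι} {f g : ι → ℝ} {c : ℝ} (hc : 0 ≤ c)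
    (hfg : ∀ i ∈ s, f i ≤ c + g i) :
    (1 / (#s : ℝ)) * ∑ i ∈ s, f i ≤ c + (1 / (#s : ℝ)) * ∑ i ∈ s, g i := by
  have hsum : ∑ i ∈ s, f i ≤ #s * c + ∑ i ∈ s, g i := by
    simpa [sum_add_distrib] using sum_le_sum hfg
  have hcard : (1 / (#s : ℝ)) * (#s * c) ≤ c := by
    rcases (Nat.cast_nonneg (α := ℝ) #s).eq_or_lt with hs | hs
    · simp [← hs, hc]
    · rw [← mul_assoc, one_div_mul_cancel hs.ne', one_mul]
  calc (1 / (#s : ℝ)) * ∑ i ∈ s, f i ≤ (1 / (#s : ℝ)) * (#s * c + ∑ i ∈ s, g i) := by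
        gcongr
    _ ≤ c + (1 / (#s : ℝ)) * ∑ i ∈ s, g i := by rw [mul_add]; linarith

theorem batch_update_regret_general
    {E : Type*} [NormedAddCommGroup E] [InnerProductSpace ℝ E] [CompleteSpace E]
    (r : ℤ → E → ℝ) (hrdiff : ∀ t : ℤ, Differentiable ℝ (r t))
    (w T : ℕ)
    (δ : ℝ)
    (u : ℤ → E → ℝ)
    (hu : ∀ (t : ℤ) (θ : E),
      u t θ = (1 / (w : ℝ)) * ∑ i ∈ Finset.range w, r (t - i) θ)
    (θ : ℤ → E)
    (hterm : ∀ t ∈ Finset.Icc (1 : ℤ) (T : ℤ),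
      ‖gradient (u (t - 1)) (θ t)‖ ≤ δ)
    (V : ℤ → ℝ)
    (hV : ∀ t ∈ Finset.Icc (1 : ℤ) (T : ℤ), ∀ x : E,
      ‖gradient (r t) x - gradient (r (t - w)) x‖ ^ 2 ≤ V t) :
    (1 / (T : ℝ)) * ∑ t ∈ Finset.Icc (1 : ℤ) (T : ℤ), ‖gradient (u t) (θ t)‖ ^ 2
      ≤ 2 * δ ^ 2
        + (2 / (w : ℝ) ^ 2) *
            ((1 / (T : ℝ)) * ∑ t ∈ Finset.Icc (1 : ℤ) (T : ℤ), V t) := by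
  obtain rfl : u = smoothedLoss r w := funext₂ hu
  have hcard : (T : ℝ) = #(Icc (1 : ℤ) T) := by simp
  rw [hcard, mul_left_comm (2 / _), mul_sum _ _ (2 / (w : ℝ) ^ 2)]
  refine average_le_add_average (by positivity : 0 ≤ 2 * δ ^ 2) fun t ht => ?_
  calc ‖gradient (smoothedLoss r w t) (θ t)‖ ^ 2
      ≤ 2 * ‖gradient (smoothedLoss r w (t - 1)) (θ t)‖ ^ 2
        + 2 / (w : ℝ) ^ 2 * ‖gradient (r t) (θ t) - gradient (r (t - w)) (θ t)‖ ^ 2 :=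
        norm_gradient_smoothedLoss_sq_le hrdiff w t (θ t)
    _ ≤ 2 * δ ^ 2 + 2 / (w : ℝ) ^ 2 * V t := by
        gcongr
        exacts [hterm t ht, hV t ht _]

/-- **Proposition 1** (regret of Batch Update with window size `b = w`).
If every iterate `θ t` satisfies the Batch-Update termination condition
`‖∇u_{w,t-1}(θ t)‖ ≤ δ` and the gradient variation is bounded by `V t`, then the
average `w`-local regret is at most `2δ² + (2/w²)·(1/T)·∑ V t`. -/
theorem batch_update_regret
    {E : Type*} [NormedAddCommGroup E] [InnerProductSpace ℝ E] [CompleteSpace E]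
    (r : ℤ → E → ℝ) (hrdiff : ∀ t : ℤ, Differentiable ℝ (r t))
    (hr0 : ∀ s : ℤ, s ≤ 0 → r s = 0)
    (w T : ℕ) (hw : 1 ≤ w) (hT : 1 ≤ T)
    (δ : ℝ) (hδ : 0 ≤ δ)
    (u : ℤ → E → ℝ)
    (hu : ∀ (t : ℤ) (θ : E),
      u t θ = (1 / (w : ℝ)) * ∑ i ∈ Finset.range w, r (t - i) θ)
    (θ : ℤ → E)
    (hterm : ∀ t ∈ Finset.Icc (1 : ℤ) (T : ℤ),
      ‖gradient (u (t - 1)) (θ t)‖ ≤ δ)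
    (V : ℤ → ℝ)
    (hVnonneg : ∀ t ∈ Finset.Icc (1 : ℤ) (T : ℤ), 0 ≤ V t)
    (hV : ∀ t ∈ Finset.Icc (1 : ℤ) (T : ℤ), ∀ x : E,
      ‖gradient (r t) x - gradient (r (t - w)) x‖ ^ 2 ≤ V t) :
    (1 / (T : ℝ)) * ∑ t ∈ Finset.Icc (1 : ℤ) (T : ℤ), ‖gradient (u t) (θ t)‖ ^ 2
      ≤ 2 * δ ^ 2
        + (2 / (w : ℝ) ^ 2) *
            ((1 / (T : ℝ)) * ∑ t ∈ Finset.Icc (1 : ℤ) (T : ℤ), V t) :=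
  batch_update_regret_general r hrdiff w T δ u hu θ hterm V hV
end

section
/- Let E be a real inner product space, let r_t : E → ℝ (for integers t, with r_s ≡ 0 for s ≤ 0) be differentiable functions, let w ≥ 1, T ≥ 1 be integers, δ ≥ 0, and let m(·; t) : E → E for t ∈ {1,…,T} be gradient generators. Define u_{w,t}(θ) = (1/w) · Σ_{i=0}^{w-1} r_{t-i}(θ) and m̄(θ; t) = (1/w) · (m(θ; t) + Σ_{i=1}^{w-1} ∇r_{t-i}(θ)). Suppose θ_1,…,θ_T ∈ E satisfy ‖m̄(θ_t; t)‖ ≤ δ for every t ∈ {1,…,T}. Then (1/T) · Σ_{t=1}^T ‖∇u_{w,t}(θ_t)‖² ≤ 2δ² + (2/(w²T)) · Σ_{t=1}^T ‖∇r_t(θ_t) − m(θ_t; t)‖². -/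
open InnerProductSpace in
lemma grad_const_mul_sum
    {E : Type*} [NormedAddCommGroup E] [InnerProductSpace ℝ E] [CompleteSpace E]
    (c : ℝ) (n : ℕ) (f : ℕ → E → ℝ) (x : E)
    (hf : ∀ i, DifferentiableAt ℝ (f i) x) :
    gradient (fun θ => c * ∑ i ∈ Finset.range n, f i θ) x
      = c • ∑ i ∈ Finset.range n, gradient (f i) x := by
  have hdsum : DifferentiableAt ℝ (fun θ => ∑ i ∈ Finset.range n, f i θ) x :=
    DifferentiableAt.fun_sum fun i _ => hf i
  unfold gradient
  rw [fderiv_const_mul hdsum c, fderiv_fun_sum (fun i _ => hf i), map_smul, map_sum]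

/-- Key regret inequality (equation (12) in the appendix): the average `w`-local
regret is bounded by `2δ²` plus `(2/(w²T))` times the sum of the trajectory
forecast errors of the gradient generator. -/
theorem regret_key_inequality
    {E : Type*} [NormedAddCommGroup E] [InnerProductSpace ℝ E] [CompleteSpace E]
    (r : ℤ → E → ℝ) (hrdiff : ∀ t : ℤ, Differentiable ℝ (r t))
    (hr0 : ∀ s : ℤ, s ≤ 0 → r s = 0)
    (w T : ℕ) (hw : 1 ≤ w) (hT : 1 ≤ T)
    (δ : ℝ) (hδ : 0 ≤ δ)
    (m : ℤ → E → E)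
    (u : ℤ → E → ℝ)
    (hu : ∀ (t : ℤ) (θ : E),
      u t θ = (1 / (w : ℝ)) * ∑ i ∈ Finset.range w, r (t - i) θ)
    (mbar : ℤ → E → E)
    (hmbar : ∀ (t : ℤ) (θ : E),
      mbar t θ = (1 / (w : ℝ)) •
        (m t θ + ∑ i ∈ Finset.Icc 1 (w - 1), gradient (r (t - i)) θ))
    (θ : ℤ → E)
    (hterm : ∀ t ∈ Finset.Icc (1 : ℤ) (T : ℤ), ‖mbar t (θ t)‖ ≤ δ) :
    (1 / (T : ℝ)) * ∑ t ∈ Finset.Icc (1 : ℤ) (T : ℤ), ‖gradient (u t) (θ t)‖ ^ 2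
      ≤ 2 * δ ^ 2
        + (2 / ((w : ℝ) ^ 2 * T)) *
            ∑ t ∈ Finset.Icc (1 : ℤ) (T : ℤ),
              ‖gradient (r t) (θ t) - m t (θ t)‖ ^ 2 := by
  have hwpos : (0 : ℝ) < w := by exact_mod_cast hw
  have hTpos : (0 : ℝ) < T := by exact_mod_cast hT
  -- pointwise bound
  have key : ∀ t ∈ Finset.Icc (1 : ℤ) (T : ℤ),
      ‖gradient (u t) (θ t)‖ ^ 2
        ≤ 2 * δ ^ 2 + (2 / (w : ℝ) ^ 2) * ‖gradient (r t) (θ t) - m t (θ t)‖ ^ 2 := by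
    intro t ht
    set x := θ t
    have hgradu : gradient (u t) x
        = (1 / (w : ℝ)) • ∑ i ∈ Finset.range w, gradient (r (t - i)) x := by
      have : u t = fun θ => (1 / (w : ℝ)) * ∑ i ∈ Finset.range w, r (t - i) θ :=
        funext fun θ => hu t θ
      rw [this, grad_const_mul_sum _ _ _ _ (fun i => (hrdiff (t - i)) x)]
    -- split the range sum
    have hsplit : (Finset.range w : Finset ℕ) = insert 0 (Finset.Icc 1 (w - 1)) := by
      ext i
      simp only [Finset.mem_range, Finset.mem_insert, Finset.mem_Icc]
      omega
    have hsum : ∑ i ∈ Finset.range w, gradient (r (t - i)) x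
        = gradient (r t) x + ∑ i ∈ Finset.Icc 1 (w - 1), gradient (r (t - i)) x := by
      rw [hsplit, Finset.sum_insert (by simp)]
      norm_num
    have hdecomp : gradient (u t) x
        = mbar t x + (1 / (w : ℝ)) • (gradient (r t) x - m t x) := by
      rw [hgradu, hsum, hmbar]
      rw [← smul_add]
      congr 1
      abel
    have hnorm : ‖gradient (u t) x‖
        ≤ ‖mbar t x‖ + (1 / (w : ℝ)) * ‖gradient (r t) x - m t x‖ := by
      rw [hdecomp]
      refine (norm_add_le _ _).trans ?_
      rw [norm_smul, Real.norm_eq_abs, abs_of_pos (by positivity)]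
    have h1 : ‖mbar t x‖ ≤ δ := hterm t ht
    have h2 : (0 : ℝ) ≤ ‖gradient (r t) x - m t x‖ := norm_nonneg _
    have h3 : (0 : ℝ) ≤ ‖gradient (u t) x‖ := norm_nonneg _
    have hsq : ‖gradient (u t) x‖ ^ 2
        ≤ (‖mbar t x‖ + (1 / (w : ℝ)) * ‖gradient (r t) x - m t x‖) ^ 2 := by
      apply sq_le_sq' <;> nlinarith [norm_nonneg (mbar t x)]
    have hinv : (2 / (w : ℝ) ^ 2) = 2 * (1 / (w : ℝ)) ^ 2 := by
      field_simp
    rw [hinv]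
    nlinarith [norm_nonneg (mbar t x), sq_nonneg ((1 / (w : ℝ)) * ‖gradient (r t) x - m t x‖ - ‖mbar t x‖), mul_pos hwpos hwpos]
  -- sum the pointwise bounds
  have hsum_le : ∑ t ∈ Finset.Icc (1 : ℤ) (T : ℤ), ‖gradient (u t) (θ t)‖ ^ 2
      ≤ ∑ t ∈ Finset.Icc (1 : ℤ) (T : ℤ),
          (2 * δ ^ 2 + (2 / (w : ℝ) ^ 2) * ‖gradient (r t) (θ t) - m t (θ t)‖ ^ 2) :=
    Finset.sum_le_sum key
  have hcard : (Finset.Icc (1 : ℤ) (T : ℤ)).card = T := by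
    rw [Int.card_Icc]; omega
  rw [Finset.sum_add_distrib, Finset.sum_const, hcard, ← Finset.mul_sum] at hsum_le
  have := mul_le_mul_of_nonneg_left hsum_le (le_of_lt (one_div_pos.mpr hTpos))
  refine this.trans (le_of_eq ?_)
  field_simp
  ring
end

section
/- Let E be a real inner product space, let b ≥ 1 be an integer, M ≥ 0, and let g_0, g_1, …, g_b ∈ E satisfy ‖g_j‖ ≤ M for all j ∈ {0,1,…,b}. Define h : ℝ^b → ℝ by h(a) = ‖Σ_{j=1}^b a_j (g_0 − g_j)‖². Then h is differentiable, and for every a in the probability simplex S_b (a_i ≥ 0, Σ_i a_i = 1) and every i ∈ {1,…,b}, the partial derivative satisfies |∂h/∂a_i (a)| ≤ 8M²; equivalently, the ℓ∞-norm of the gradient of h at a is at most 8M². -/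
/-! The map `a ↦ ∑ⱼ aⱼ (g₀ − gⱼ)` is linear, so the `i`-th partial derivative of its squared
norm is `2 ⟪∑ⱼ aⱼ (g₀ − gⱼ), g₀ − gᵢ⟫`. On the simplex the left factor is a convex combination
of vectors of norm at most `2M`, hence itself of norm at most `2M`, and Cauchy–Schwarz gives
`2 · 2M · 2M = 8M²`. -/

open scoped RealInnerProductSpace

section

variable {ι : Type*} [Fintype ι]

theorem norm_sum_smul_le_of_mem_stdSimplex {F : Type*} [SeminormedAddCommGroup F]
    [NormedSpace ℝ F] {v : ι → F} {a : ι → ℝ} {C : ℝ}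
    (ha : a ∈ stdSimplex ℝ ι) (hv : ∀ j, ‖v j‖ ≤ C) : ‖∑ j, a j • v j‖ ≤ C :=
  mem_closedBall_zero_iff.mp <| (convex_closedBall 0 C).sum_mem (fun j _ => ha.1 j) ha.2
    fun j _ => mem_closedBall_zero_iff.mpr (hv j)

variable {E : Type*} [NormedAddCommGroup E] [InnerProductSpace ℝ E]

theorem hasFDerivAt_norm_sq_linearCombination (v : ι → E) (a : ι → ℝ) :
    HasFDerivAt (fun a : ι → ℝ => ‖∑ j, a j • v j‖ ^ 2)
      (2 • (innerSL ℝ (∑ j, a j • v j)).comp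
        (LinearMap.toContinuousLinearMap (Fintype.linearCombination ℝ v))) a := by
  have hL := (LinearMap.toContinuousLinearMap (Fintype.linearCombination ℝ v)).hasFDerivAt
    (x := a)
  simpa only [LinearMap.coe_toContinuousLinearMap', Fintype.linearCombination_apply]
    using hL.norm_sq

theorem differentiable_norm_sq_linearCombination (v : ι → E) :
    Differentiable ℝ (fun a : ι → ℝ => ‖∑ j, a j • v j‖ ^ 2) := fun a =>
  (hasFDerivAt_norm_sq_linearCombination v a).differentiableAt

theorem fderiv_norm_sq_linearCombination_single [DecidableEq ι] (v : ι → E) (a : ι → ℝ)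
    (i : ι) :
    fderiv ℝ (fun a : ι → ℝ => ‖∑ j, a j • v j‖ ^ 2) a (Pi.single i 1) =
      2 * ⟪∑ j, a j • v j, v i⟫ := by
  rw [(hasFDerivAt_norm_sq_linearCombination v a).fderiv]
  simp only [smul_apply, ContinuousLinearMap.comp_apply,
    LinearMap.coe_toContinuousLinearMap', Fintype.linearCombination_apply_single, one_smul,
    innerSL_apply_apply, nsmul_eq_mul, Nat.cast_ofNat]

end

theorem forecast_error_gradient_bound_general
    {E : Type*} [NormedAddCommGroup E] [InnerProductSpace ℝ E]
    (b : ℕ) (M : ℝ)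
    (g₀ : E) (g : Fin b → E)
    (hg₀ : ‖g₀‖ ≤ M) (hg : ∀ j : Fin b, ‖g j‖ ≤ M)
    (h : (Fin b → ℝ) → ℝ)
    (hh : ∀ a : Fin b → ℝ, h a = ‖∑ j : Fin b, a j • (g₀ - g j)‖ ^ 2) :
    Differentiable ℝ h ∧
      ∀ a : Fin b → ℝ, (∀ i, 0 ≤ a i) → (∑ i, a i) = 1 →
        ∀ i : Fin b, |fderiv ℝ h a (Pi.single i 1)| ≤ 8 * M ^ 2 := by
  obtain rfl : h = fun a => ‖∑ j, a j • (g₀ - g j)‖ ^ 2 := funext hh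
  refine ⟨differentiable_norm_sq_linearCombination _, fun a ha hsum i => ?_⟩
  have hv : ∀ j, ‖g₀ - g j‖ ≤ 2 * M := fun j =>
    (norm_sub_le _ _).trans (by linarith [hg j])
  have hsum_le : ‖∑ j, a j • (g₀ - g j)‖ ≤ 2 * M :=
    norm_sum_smul_le_of_mem_stdSimplex ⟨ha, hsum⟩ hv
  rw [fderiv_norm_sq_linearCombination_single, abs_mul, abs_two]
  calc 2 * |⟪∑ j, a j • (g₀ - g j), g₀ - g i⟫|
      ≤ 2 * (‖∑ j, a j • (g₀ - g j)‖ * ‖g₀ - g i‖) := by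
        gcongr; exact abs_real_inner_le_norm _ _
    _ ≤ 2 * (2 * M * (2 * M)) := by
        gcongr
        exacts [(norm_nonneg _).trans hsum_le, hv i]
    _ = 8 * M ^ 2 := by ring

/-- **Lemma 1** of the appendix: with `‖g_j‖ ≤ M` for `j ∈ {0,…,b}`, the function
`h(a) = ‖∑_{j=1}^b a_j (g_0 − g_j)‖²` is differentiable and on the probability
simplex each partial derivative satisfies `|∂h/∂a_i| ≤ 8M²` (equivalently, the
`ℓ∞`-norm of the gradient of `h` is at most `8M²`). -/
theorem forecast_error_gradient_bound
    {E : Type*} [NormedAddCommGroup E] [InnerProductSpace ℝ E]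
    (b : ℕ) (hb : 1 ≤ b) (M : ℝ) (hM : 0 ≤ M)
    (g₀ : E) (g : Fin b → E)
    (hg₀ : ‖g₀‖ ≤ M) (hg : ∀ j : Fin b, ‖g j‖ ≤ M)
    (h : (Fin b → ℝ) → ℝ)
    (hh : ∀ a : Fin b → ℝ, h a = ‖∑ j : Fin b, a j • (g₀ - g j)‖ ^ 2) :
    Differentiable ℝ h ∧
      ∀ a : Fin b → ℝ, (∀ i, 0 ≤ a i) → (∑ i, a i) = 1 →
        ∀ i : Fin b, |fderiv ℝ h a (Pi.single i 1)| ≤ 8 * M ^ 2 :=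
  forecast_error_gradient_bound_general b M g₀ g hg₀ hg h hh
end
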